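/- arXiv:2504.15398 — 3 statements merged into one kernel-verified Lean document; each statement's English description precedes it below -/
import Mathlib

section
/- Let (Y,≤) be a partial order of cardinality ω₁. Then there exists a well-founded cofinal subset X ⊆ Y such that for every x ∈ X, the set of predecessors of x within X, i.e. {z ∈ X : z < x}, is countable. -/
/-- Every partial order of cardinality ω₁ has a well-founded cofinal subset in which
every element has only countably many predecessors. -/
theorem stmt_0 {Y : Type*} [PartialOrder Y] (hY : Cardinal.mk Y = Cardinal.aleph 1) :
    ∃ X : Set Y, (∀ y : Y, ∃ x ∈ X, y ≤ x) ∧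
      X.WellFoundedOn (· < ·) ∧
      ∀ x ∈ X, {z ∈ X | z < x}.Countable := by
  classical
  set c := Cardinal.aleph 1 with hc
  have hmk : Cardinal.mk Y = Cardinal.mk c.ord.ToType := by
    rw [hY, Cardinal.mk_toType, Cardinal.card_ord]
  obtain ⟨e⟩ := Cardinal.eq.mp hmk
  -- X : elements not ≤ anything earlier in the enumeration
  set X : Set Y := {x : Y | ∀ z : Y, e z < e x → ¬ x ≤ z} with hX
  -- key: indices respect strict order within X
  have key : ∀ x₁ ∈ X, ∀ x₂ ∈ X, x₁ < x₂ → e x₁ < e x₂ := by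
    intro x₁ h₁ x₂ h₂ hlt
    rcases lt_trichotomy (e x₁) (e x₂) with h | h | h
    · exact h
    · exact absurd (e.injective h) (ne_of_lt hlt)
    · exact absurd hlt.le (h₁ x₂ h)
  refine ⟨X, ?_, ?_, ?_⟩
  · -- cofinal
    intro y
    have hne : {i : c.ord.ToType | y ≤ e.symm i}.Nonempty :=
      ⟨e y, by simp⟩
    obtain ⟨i₀, hi₀, hmin⟩ := (wellFounded_lt (α := c.ord.ToType)).has_min _ hne
    refine ⟨e.symm i₀, ?_, hi₀⟩
    intro z hz hle
    have : y ≤ z := le_trans hi₀ hle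
    have hz' : e z ∈ {i : c.ord.ToType | y ≤ e.symm i} := by
      simpa using this
    exact hmin _ hz' (by simpa using hz)
  · -- well-founded
    have : WellFounded (fun a b : X => (e a.1) < (e b.1)) :=
      InvImage.wf _ (wellFounded_lt (α := c.ord.ToType))
    exact Subrelation.wf (fun {a b} h => key _ a.2 _ b.2 h) this
  · -- countable predecessors
    intro x hx
    rw [Cardinal.countable_iff_lt_aleph_one]
    have hinj : Set.InjOn e {z ∈ X | z < x} := fun a _ b _ h => e.injective h
    have hsub : e '' {z ∈ X | z < x} ⊆ Set.Iio (e x) := by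
      rintro _ ⟨z, ⟨hzX, hzx⟩, rfl⟩
      exact key _ hzX _ hx hzx
    calc Cardinal.mk {z ∈ X | z < x}
        = Cardinal.mk (e '' {z ∈ X | z < x}) := (Cardinal.mk_image_eq_of_injOn _ _ hinj).symm
      _ ≤ Cardinal.mk (Set.Iio (e x)) := Cardinal.mk_le_mk_of_subset hsub
      _ < Cardinal.aleph 1 := Cardinal.mk_Iio_ord_toType (e x)
end

section
/- Let 𝒞 = ⟨C_δ⟩ be a sequence indexed by countable limit ordinals such that for every uncountable S ⊆ ω₁ the set {δ : C_δ ⊆ S} is stationary (a ♣-guessing property). Define C⁰_δ = C_δ, Lim₀ = Lim, Lim_{n+1} = {δ ∈ Lim : C_δ ⊆ Lim_n}, and C^{n+1}_δ = ⋃_{ξ ∈ C_δ} C^n_ξ for δ ∈ Lim_{n+1}. Then for every n ∈ ω and every uncountable S ⊆ ω₁, the set {δ ∈ Lim_n : C^n_δ ⊆ S} is stationary in ω₁. -/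
open Ordinal Set

/-- The first uncountable ordinal. -/
noncomputable def omega1 : Ordinal := (Cardinal.aleph 1).ord

/-- `C` is a closed unbounded subset of `ω₁`. -/
def IsClubBelowOmega1 (C : Set Ordinal) : Prop :=
  C ⊆ Set.Iio omega1 ∧
  (∀ a < omega1, ∃ b ∈ C, a < b) ∧
  (∀ o : Ordinal, o < omega1 → Order.IsSuccLimit o → (∀ a < o, ∃ b ∈ C, a < b ∧ b < o) → o ∈ C)

/-- `S` is stationary in `ω₁`: it meets every closed unbounded subset of `ω₁`. -/
def IsStationaryOmega1 (S : Set Ordinal) : Prop :=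
  ∀ C : Set Ordinal, IsClubBelowOmega1 C → (S ∩ C).Nonempty

/-- The countable limit ordinals. -/
def LimSet : Set Ordinal := {o : Ordinal | o < omega1 ∧ Order.IsSuccLimit o}

/-- The iterated sets `Lim_n`: `Lim₀ = Lim` and `Lim_{n+1} = {δ ∈ Lim : C_δ ⊆ Lim_n}`. -/
def LimIter (C : Ordinal → Set Ordinal) : ℕ → Set Ordinal
  | 0 => LimSet
  | n + 1 => {δ ∈ LimSet | C δ ⊆ LimIter C n}

/-- The iterated guessing sets `C^n_δ`: `C⁰_δ = C_δ` and `C^{n+1}_δ = ⋃_{ξ ∈ C_δ} C^n_ξ`. -/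
def CIter (C : Ordinal → Set Ordinal) : ℕ → Ordinal → Set Ordinal
  | 0, δ => C δ
  | n + 1, δ => ⋃ ξ ∈ C δ, CIter C n ξ

lemma omega1_isLimit : Order.IsSuccLimit omega1 :=
  Cardinal.isSuccLimit_ord (Cardinal.aleph0_le_aleph 1)

lemma countable_not_stationary {T : Set Ordinal} (hT : T ⊆ Set.Iio omega1)
    (hc : T.Countable) : ¬ IsStationaryOmega1 T := by
  intro hstat
  have hIio : IsClubBelowOmega1 (Set.Iio omega1) := by
    refine ⟨le_refl _, fun a ha => ⟨Order.succ a, omega1_isLimit.succ_lt ha, Order.lt_succ a⟩,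
      fun o ho _ _ => ho⟩
  have hne : T.Nonempty := by
    obtain ⟨t, ht, _⟩ := hstat _ hIio
    exact ⟨t, ht⟩
  obtain ⟨f, hf⟩ := Set.Countable.exists_eq_range hc hne
  set β : Ordinal := ⨆ n, f n with hβdef
  have hβ : β < omega1 := by
    apply Ordinal.iSup_lt_ord_lift
    · rw [show omega1.cof = Cardinal.aleph 1 from Cardinal.isRegular_aleph_one.cof_eq]
      simpa using Cardinal.aleph0_lt_aleph_one
    · intro n
      exact hT (hf ▸ Set.mem_range_self n)
  have hle : ∀ t ∈ T, t ≤ β := by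
    intro t ht
    rw [hf] at ht
    obtain ⟨n, rfl⟩ := ht
    exact Ordinal.le_iSup f n
  have hclub : IsClubBelowOmega1 {o | β < o ∧ o < omega1} := by
    refine ⟨fun o ho => ho.2, ?_, ?_⟩
    · intro a ha
      refine ⟨Order.succ (max a β), ⟨?_, ?_⟩, ?_⟩
      · exact lt_of_le_of_lt (le_max_right a β) (Order.lt_succ _)
      · exact omega1_isLimit.succ_lt (max_lt ha hβ)
      · exact lt_of_le_of_lt (le_max_left a β) (Order.lt_succ _)
    · intro o ho hlim h
      obtain ⟨b, hb, hab, hbo⟩ := h 0 hlim.pos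
      exact ⟨lt_trans hb.1 hbo, ho⟩
  obtain ⟨t, htT, htC⟩ := hstat _ hclub
  exact absurd htC.1 (not_lt.2 (hle t htT))

lemma limIter_subset (C : Ordinal → Set Ordinal) (n : ℕ) : LimIter C n ⊆ LimSet := by
  cases n with
  | zero => exact le_refl _
  | succ n => exact fun δ hδ => hδ.1

/-- If `⟨C_δ⟩` is a ♣-sequence (each `C_δ ⊆ δ` countable and unbounded in `δ`, guessing
every uncountable `S ⊆ ω₁` stationarily), then for every `n` and every uncountable
`S ⊆ ω₁` the set `{δ ∈ Lim_n : C^n_δ ⊆ S}` is stationary in `ω₁`. -/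
theorem stmt_16 (C : Ordinal → Set Ordinal)
    (hsub : ∀ δ ∈ LimSet, C δ ⊆ Set.Iio δ)
    (hctble : ∀ δ ∈ LimSet, (C δ).Countable)
    (hunbdd : ∀ δ ∈ LimSet, ∀ a < δ, ∃ b ∈ C δ, a < b)
    (hguess : ∀ S : Set Ordinal, S ⊆ Set.Iio omega1 → ¬ S.Countable →
      IsStationaryOmega1 {δ ∈ LimSet | C δ ⊆ S}) :
    ∀ n : ℕ, ∀ S : Set Ordinal, S ⊆ Set.Iio omega1 → ¬ S.Countable →
      IsStationaryOmega1 {δ ∈ LimIter C n | CIter C n δ ⊆ S} := by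
  intro n
  induction n with
  | zero => exact hguess
  | succ n ih =>
    intro S hS hSc D hD
    set T : Set Ordinal := {δ ∈ LimIter C n | CIter C n δ ⊆ S} with hTdef
    have hTsub : T ⊆ Set.Iio omega1 := fun δ hδ => (limIter_subset C n hδ.1).1
    have hTunc : ¬ T.Countable := fun hc =>
      countable_not_stationary hTsub hc (ih S hS hSc)
    obtain ⟨δ, ⟨hδLim, hδT⟩, hδD⟩ := hguess T hTsub hTunc D hD
    refine ⟨δ, ⟨⟨hδLim, fun ξ hξ => (hδT hξ).1⟩, ?_⟩, hδD⟩
    show (⋃ ξ ∈ C δ, CIter C n ξ) ⊆ S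
    exact Set.iUnion₂_subset fun ξ hξ => (hδT hξ).2
end

section
/- Let F be a finite set of ordinals with |F| = m_{k+1}, decomposed canonically as F = ⋃_{i < n_{k+1}} F_i where ⟨F_i⟩ is a Δ-system with root R(F) of size r_{k+1}, R(F) < F_0\R(F) < … < F_{n_{k+1}-1}\R(F), and |F_i| = m_k for each i. Then, using the increasing enumeration of F, each F_i equals F[r_{k+1}] ∪ F[[a_i, a_{i+1})] where a_i = r_{k+1} + i·(m_k - r_{k+1}); in particular the decomposition ⟨F_i⟩ is unique. -/
/-- `G` (with root `R`) is a canonical-type decomposition of `F`: the `G i` are `n`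
sets of size `mk` whose union is `F`, forming a Δ-system with root `R` of size `rk`,
with `R` below all tails and the tails in increasing order. -/
def IsCanonDecomp (mk rk : ℕ) {n : ℕ} (F : Finset Ordinal)
    (G : Fin n → Finset Ordinal) (R : Finset Ordinal) : Prop :=
  (∀ i, (G i).card = mk) ∧
  F = Finset.univ.biUnion G ∧
  (∀ i j, i ≠ j → G i ∩ G j = R) ∧
  R.card = rk ∧
  (∀ i, ∀ x ∈ R, ∀ y ∈ G i \ R, x < y) ∧
  (∀ i j : Fin n, i < j → ∀ x ∈ G i \ R, ∀ y ∈ G j \ R, x < y)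

private lemma fin_lower_iff {m : ℕ} {I : Finset (Fin m)}
    (hI : ∀ a ∈ I, ∀ b : Fin m, b ≤ a → b ∈ I) (a : Fin m) :
    a ∈ I ↔ (a : ℕ) < I.card := by
  constructor
  · intro ha
    have h1 : Finset.Iic a ⊆ I := fun b hb => hI a ha b (Finset.mem_Iic.mp hb)
    have h2 := Finset.card_le_card h1
    rw [Fin.card_Iic] at h2
    omega
  · intro h
    by_contra ha
    have h1 : I ⊆ Finset.Iio a := by
      intro b hb
      rw [Finset.mem_Iio]
      by_contra hba
      exact ha (hI b hb a (le_of_not_gt hba))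
    have h2 := Finset.card_le_card h1
    rw [Fin.card_Iio] at h2
    omega

private lemma initial_mem_iff {F A : Finset Ordinal} (hA : A ⊆ F)
    (hlt : ∀ x ∈ A, ∀ y ∈ F, y ∉ A → x < y) {m : ℕ} (hF : F.card = m) (a : Fin m) :
    ((F.orderIsoOfFin hF a : Ordinal) ∈ A) ↔ (a : ℕ) < A.card := by
  set e := F.orderIsoOfFin hF with he
  have hinj : Function.Injective (fun b : Fin m => (e b : Ordinal)) :=
    fun b c h => e.injective (Subtype.coe_injective h)
  set I : Finset (Fin m) := Finset.univ.filter (fun b => (e b : Ordinal) ∈ A) with hI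
  have hIA : A = I.image (fun b => (e b : Ordinal)) := by
    ext x
    simp only [hI, Finset.mem_image, Finset.mem_filter, Finset.mem_univ, true_and]
    constructor
    · intro hx
      exact ⟨e.symm ⟨x, hA hx⟩, by simp [hx], by simp⟩
    · rintro ⟨b, hb, rfl⟩; exact hb
  have hIc : I.card = A.card := by rw [hIA, Finset.card_image_of_injective _ hinj]
  have hlow : ∀ b ∈ I, ∀ c : Fin m, c ≤ b → c ∈ I := by
    intro b hb c hcb
    simp only [hI, Finset.mem_filter, Finset.mem_univ, true_and] at hb ⊢
    by_contra hc
    have h1 : (e b : Ordinal) < (e c : Ordinal) := hlt _ hb _ (e c).2 hc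
    have h2 : (e c : Ordinal) ≤ (e b : Ordinal) := Subtype.coe_le_coe.mpr (e.monotone hcb)
    exact absurd h1 (not_lt.mpr h2)
  have h := fin_lower_iff hlow a
  rw [hIc] at h
  simpa [hI] using h

private lemma canon_eq {mk rk nk1 m : ℕ} (hrk : rk < mk) (hn : 2 ≤ nk1)
    (hm : m = rk + (mk - rk) * nk1)
    (F : Finset Ordinal) (hF : F.card = m)
    (G : Fin nk1 → Finset Ordinal) (R : Finset Ordinal)
    (hG : IsCanonDecomp mk rk F G R) (i : Fin nk1) :
    G i = (Finset.univ.filter (fun a : Fin m =>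
        (a : ℕ) < rk ∨
          (rk + (i : ℕ) * (mk - rk) ≤ (a : ℕ) ∧ (a : ℕ) < rk + ((i : ℕ) + 1) * (mk - rk)))).image
        (fun a : Fin m => (F.orderIsoOfFin hF a : Ordinal)) := by
  obtain ⟨hcard, hunion, hinter, hRcard, hRlt, hTlt⟩ := hG
  set e := F.orderIsoOfFin hF with he
  have hGF : ∀ j, G j ⊆ F := by
    intro j x hx
    rw [hunion]; exact Finset.mem_biUnion.mpr ⟨j, Finset.mem_univ _, hx⟩
  have hRG : ∀ j, R ⊆ G j := by
    intro j
    have z0 : Fin nk1 := ⟨0, by omega⟩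
    have z1 : Fin nk1 := ⟨1, by omega⟩
    obtain ⟨j', hj'⟩ : ∃ j' : Fin nk1, j' ≠ j := by
      by_cases h : j = (⟨0, by omega⟩ : Fin nk1)
      · exact ⟨⟨1, by omega⟩, by simp [h, Fin.ext_iff]⟩
      · exact ⟨⟨0, by omega⟩, fun hc => h hc.symm⟩
    rw [← hinter j' j hj']
    exact Finset.inter_subset_right
  set T : Fin nk1 → Finset Ordinal := fun j => G j \ R with hT
  have hTcard : ∀ j, (T j).card = mk - rk := by
    intro j
    show (G j \ R).card = mk - rk
    rw [Finset.card_sdiff_of_subset (hRG j), hcard, hRcard]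
  have hTdisj : ∀ j j' : Fin nk1, j ≠ j' → ∀ x, x ∈ T j → x ∈ T j' → False := by
    intro j j' hjj' x hx hx'
    have : x ∈ G j ∩ G j' := Finset.mem_inter.mpr ⟨(Finset.mem_sdiff.mp hx).1, (Finset.mem_sdiff.mp hx').1⟩
    rw [hinter j j' hjj'] at this
    exact (Finset.mem_sdiff.mp hx).2 this
  have hFmem : ∀ x ∈ F, x ∈ R ∨ ∃ j, x ∈ T j := by
    intro x hx
    rw [hunion] at hx
    obtain ⟨j, _, hj⟩ := Finset.mem_biUnion.mp hx
    by_cases hxR : x ∈ R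
    · exact Or.inl hxR
    · exact Or.inr ⟨j, Finset.mem_sdiff.mpr ⟨hj, hxR⟩⟩
  set A : ℕ → Finset Ordinal :=
    fun n => R ∪ (Finset.univ.filter fun j : Fin nk1 => (j : ℕ) < n).biUnion T with hA
  have hAmem : ∀ n x, x ∈ A n ↔ x ∈ R ∨ ∃ j : Fin nk1, (j : ℕ) < n ∧ x ∈ T j := by
    intro n x
    simp only [hA, Finset.mem_union, Finset.mem_biUnion, Finset.mem_filter, Finset.mem_univ,
      true_and]
  have hAsub : ∀ n, A n ⊆ F := by
    intro n x hx
    rcases (hAmem n x).mp hx with h | ⟨j, _, h⟩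
    · exact hGF ⟨0, by omega⟩ (hRG _ h)
    · exact hGF j (Finset.sdiff_subset h)
  have hAlt : ∀ n, ∀ x ∈ A n, ∀ y ∈ F, y ∉ A n → x < y := by
    intro n x hx y hyF hy
    have hyR : y ∉ R := fun h => hy ((hAmem n y).mpr (Or.inl h))
    obtain ⟨j, hj⟩ : ∃ j, y ∈ T j := by
      rcases hFmem y hyF with h | h
      · exact absurd h hyR
      · exact h
    have hjn : n ≤ (j : ℕ) := by
      by_contra h
      exact hy ((hAmem n y).mpr (Or.inr ⟨j, by omega, hj⟩))
    rcases (hAmem n x).mp hx with h | ⟨j', hj', hx'⟩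
    · exact hRlt j x h y hj
    · exact hTlt j' j (by rw [Fin.lt_def]; omega) x hx' y hj
  have hfiltercard : ∀ n, n ≤ nk1 →
      (Finset.univ.filter fun j : Fin nk1 => (j : ℕ) < n).card = n := by
    intro n hn'
    have himg : (Finset.univ.filter fun j : Fin nk1 => (j : ℕ) < n).image Fin.val
        = Finset.range n := by
      ext b
      simp only [Finset.mem_image, Finset.mem_filter, Finset.mem_univ, true_and,
        Finset.mem_range]
      constructor
      · rintro ⟨j, hj, rfl⟩; exact hj
      · intro hb; exact ⟨⟨b, by omega⟩, hb, rfl⟩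
    have := Finset.card_image_of_injective
      (Finset.univ.filter fun j : Fin nk1 => (j : ℕ) < n) Fin.val_injective
    rw [himg, Finset.card_range] at this
    omega
  have hAcard : ∀ n, n ≤ nk1 → (A n).card = rk + n * (mk - rk) := by
    intro n hn'
    have hdisj : Disjoint R ((Finset.univ.filter fun j : Fin nk1 => (j : ℕ) < n).biUnion T) := by
      rw [Finset.disjoint_left]
      intro x hxR hxB
      obtain ⟨j, _, hj⟩ := Finset.mem_biUnion.mp hxB
      exact (Finset.mem_sdiff.mp hj).2 hxR
    have hpw : ∀ j ∈ (Finset.univ.filter fun j : Fin nk1 => (j : ℕ) < n),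
        ∀ j' ∈ (Finset.univ.filter fun j : Fin nk1 => (j : ℕ) < n), j ≠ j' →
        Disjoint (T j) (T j') := by
      intro j _ j' _ hjj'
      rw [Finset.disjoint_left]
      intro x hx hx'
      exact hTdisj j j' hjj' x hx hx'
    rw [hA]
    simp only
    rw [Finset.card_union_of_disjoint hdisj, Finset.card_biUnion hpw]
    rw [Finset.sum_congr rfl (fun j _ => hTcard j), Finset.sum_const, hfiltercard n hn',
      smul_eq_mul, hRcard]
  have hmemA : ∀ n, n ≤ nk1 → ∀ a : Fin m, ((e a : Ordinal) ∈ A n ↔ (a : ℕ) < rk + n * (mk - rk)) := by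
    intro n hn' a
    have h := initial_mem_iff (hAsub n) (hAlt n) hF a
    rw [hAcard n hn'] at h
    exact h
  have hmemR : ∀ a : Fin m, ((e a : Ordinal) ∈ R ↔ (a : ℕ) < rk) := by
    intro a
    have hA0 : A 0 = R := by
      ext x
      rw [hAmem]
      simp
    have h := hmemA 0 (by omega) a
    rw [hA0] at h
    simpa using h
  have hmemT : ∀ a : Fin m, ((e a : Ordinal) ∈ T i ↔
      (rk + (i : ℕ) * (mk - rk) ≤ (a : ℕ) ∧ (a : ℕ) < rk + ((i : ℕ) + 1) * (mk - rk))) := by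
    intro a
    have hTA : ∀ x, x ∈ T i ↔ (x ∈ A ((i : ℕ) + 1) ∧ x ∉ A (i : ℕ)) := by
      intro x
      rw [hAmem, hAmem]
      constructor
      · intro hx
        refine ⟨Or.inr ⟨i, by omega, hx⟩, ?_⟩
        rintro (h | ⟨j, hj, hx'⟩)
        · exact (Finset.mem_sdiff.mp hx).2 h
        · exact hTdisj i j (by rw [Ne, Fin.ext_iff]; omega) x hx hx'
      · rintro ⟨h1 | ⟨j, hj, hx'⟩, h2⟩
        · exact absurd (Or.inl h1) h2
        · have : (j : ℕ) = (i : ℕ) := by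
            by_contra h
            exact h2 (Or.inr ⟨j, by omega, hx'⟩)
          have : j = i := Fin.ext this
          rwa [← this]
    rw [hTA, hmemA ((i : ℕ) + 1) (by omega) a, hmemA (i : ℕ) (by omega) a]
    constructor
    · rintro ⟨h1, h2⟩; exact ⟨le_of_not_gt h2, h1⟩
    · rintro ⟨h1, h2⟩; exact ⟨h2, not_lt.mpr h1⟩
  have hGmem : ∀ x, x ∈ G i ↔ (x ∈ R ∨ x ∈ T i) := by
    intro x
    constructor
    · intro hx
      by_cases hxR : x ∈ R
      · exact Or.inl hxR
      · exact Or.inr (Finset.mem_sdiff.mpr ⟨hx, hxR⟩)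
    · rintro (h | h)
      · exact hRG i h
      · exact Finset.sdiff_subset h
  ext x
  simp only [Finset.mem_image, Finset.mem_filter, Finset.mem_univ, true_and]
  constructor
  · intro hx
    have hxF : x ∈ F := hGF i hx
    refine ⟨e.symm ⟨x, hxF⟩, ?_, by simp⟩
    have hex : (e (e.symm ⟨x, hxF⟩) : Ordinal) = x := by simp
    rcases (hGmem x).mp hx with h | h
    · exact Or.inl ((hmemR _).mp (by rw [hex]; exact h))
    · exact Or.inr ((hmemT _).mp (by rw [hex]; exact h))
  · rintro ⟨a, ha, rfl⟩
    rcases ha with h | h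
    · exact (hGmem _).mpr (Or.inl ((hmemR a).mpr h))
    · exact (hGmem _).mpr (Or.inr ((hmemT a).mpr h))

/-- Each member of the canonical decomposition of `F ∈ 𝓕_{k+1}` is
`F[r_{k+1}] ∪ F[[a_i, a_{i+1})]` with `a_i = r_{k+1} + i·(m_k - r_{k+1})`, where `F(a)`
denotes the `a`-th element of `F` in increasing order; in particular the decomposition
is unique. -/
theorem stmt_18 {mk rk nk1 m : ℕ} (hrk : rk < mk) (hn : 2 ≤ nk1)
    (hm : m = rk + (mk - rk) * nk1)
    (F : Finset Ordinal) (hF : F.card = m)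
    (G : Fin nk1 → Finset Ordinal) (R : Finset Ordinal)
    (hG : IsCanonDecomp mk rk F G R) :
    (∀ i : Fin nk1, G i =
      (Finset.univ.filter (fun a : Fin m =>
        (a : ℕ) < rk ∨
          (rk + (i : ℕ) * (mk - rk) ≤ (a : ℕ) ∧ (a : ℕ) < rk + ((i : ℕ) + 1) * (mk - rk)))).image
        (fun a : Fin m => (F.orderIsoOfFin hF a : Ordinal))) ∧
    ∀ (G' : Fin nk1 → Finset Ordinal) (R' : Finset Ordinal),
      IsCanonDecomp mk rk F G' R' → G' = G := by
  refine ⟨fun i => canon_eq hrk hn hm F hF G R hG i, fun G' R' hG' => funext fun i => ?_⟩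
  rw [canon_eq hrk hn hm F hF G' R' hG' i, canon_eq hrk hn hm F hF G R hG i]
end
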